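/- Let a, c, d be positive integers and set b = 1. For the pair (X, Oz) associated to the complex surface V = {(x,y,z) ∈ ℂ³ : y^a = z·x^c + x^d}, Whitney (a)-regularity at the origin holds if and only if Whitney (b)-regularity at the origin holds; indeed both are equivalent to (a = 1 or d ≤ c). -/

import Mathlib

/-
Work along a sequence in X tending to 0 and compare sizes with `=o`/`=O`/`=Θ`; each partial
derivative is `O(‖∇f‖)` and each of `x`, `y` is `O(‖(x, y)‖)`.

If `a = 1` then `∂f/∂y = 1`, so `‖∇f‖ ≥ 1`, while `∂f/∂z = -x^c → 0`, and on `V` the (bᵖⁱ)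
numerator `x ∂f/∂x + y ∂f/∂y` is `x · o(1)`.

If `d ≤ c` then `∂f/∂x = -x^(d-1) (c z x^(c-d) + d) =Θ x^(d-1)` and, on `V`,
`y^a = x^d (z x^(c-d) + 1) =Θ x^d`. Hence `∂f/∂z = -x^c = o(x^(d-1))`, which is (a). On `V` the
(bᵖⁱ) numerator is `(a - c) z x^c + (a - d) x^d`, with `z x^c = o(x^d)` and
`x^d = x · x^(d-1) = O(‖(x, y)‖ ‖∇f‖)`. When `a ≠ d` the comparison `y^a =Θ x^d` gives `x = o(y)`
(if `d < a`) or `y = o(x)` (if `a < d`), and then `x^d = x · x^(d-1)`, resp.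
`x^d = O(y · y^(a-1))`, is `o(‖(x, y)‖ ‖∇f‖)`.

Conversely, if `a ≥ 2` and `c < d`, the curve `t ↦ (t, 0, -t^(d-c))` lies in X and
`∇f = ((c - d) t^(d-1), 0, -t^c)` there, so `|∂f/∂z| / ‖∇f‖ ≥ 1 / (d - c + 1)` for `|t| ≤ 1`:
(a) fails.
-/

open Filter

noncomputable section

/-- x-partial derivative of f(x,y,z) = y^a - z^b*x^c - x^d. -/
def fxC (b c d : ℕ) (x z : ℂ) : ℂ :=
  -(c : ℂ) * z ^ b * x ^ (c - 1) - (d : ℂ) * x ^ (d - 1)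

/-- y-partial derivative of f. -/
def fyC (a : ℕ) (y : ℂ) : ℂ := (a : ℂ) * y ^ (a - 1)

/-- z-partial derivative of f. -/
def fzC (b c : ℕ) (x z : ℂ) : ℂ := -(b : ℂ) * z ^ (b - 1) * x ^ c

/-- Hermitian norm on ℂ³. -/
def nrm3C (u v w : ℂ) : ℝ := Real.sqrt (‖u‖ ^ 2 + ‖v‖ ^ 2 + ‖w‖ ^ 2)

/-- Hermitian norm on ℂ². -/
def nrm2C (u v : ℂ) : ℝ := Real.sqrt (‖u‖ ^ 2 + ‖v‖ ^ 2)

/-- Norm of the gradient ∇f(x,y,z). -/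
def gradNormC (a b c d : ℕ) (x y z : ℂ) : ℝ :=
  nrm3C (fxC b c d x z) (fyC a y) (fzC b c x z)

/-- The gradient ∇f(x,y,z) is nonzero. -/
def gradNeC (a b c d : ℕ) (x y z : ℂ) : Prop :=
  ¬ (fxC b c d x z = 0 ∧ fyC a y = 0 ∧ fzC b c x z = 0)

/-- Membership in X = V \ Oz, where V = {y^a = z^b x^c + x^d} and Oz is the z-axis. -/
def inXC (a b c d : ℕ) (x y z : ℂ) : Prop :=
  y ^ a = z ^ b * x ^ c + x ^ d ∧ ¬ (x = 0 ∧ y = 0)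

/-- Whitney (a)-regularity of the pair (X, Oz) at the origin. -/
def aRegC (a b c d : ℕ) : Prop :=
  ∀ x y z : ℕ → ℂ,
    (∀ n, inXC a b c d (x n) (y n) (z n)) →
    Tendsto (fun n => (x n, y n, z n)) atTop (nhds ((0 : ℂ), (0 : ℂ), (0 : ℂ))) →
    (∀ n, gradNeC a b c d (x n) (y n) (z n)) →
    Tendsto (fun n => ‖fzC b c (x n) (z n)‖ / gradNormC a b c d (x n) (y n) (z n))
      atTop (nhds 0)

/-- The (bᵖⁱ) condition for the retraction π(x,y,z) = (0,0,z). -/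
def bpiC (a b c d : ℕ) : Prop :=
  ∀ x y z : ℕ → ℂ,
    (∀ n, inXC a b c d (x n) (y n) (z n)) →
    Tendsto (fun n => (x n, y n, z n)) atTop (nhds ((0 : ℂ), (0 : ℂ), (0 : ℂ))) →
    (∀ n, gradNeC a b c d (x n) (y n) (z n)) →
    Tendsto (fun n => ‖x n * fxC b c d (x n) (z n) + y n * fyC a (y n)‖ /
        (nrm2C (x n) (y n) * gradNormC a b c d (x n) (y n) (z n)))
      atTop (nhds 0)

/-- Whitney (b)-regularity of the pair (X, Oz) at the origin. -/
def bRegC (a b c d : ℕ) : Prop := aRegC a b c d ∧ bpiC a b c d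

/-- Kuo–Verdier (w)-regularity of the pair (X, Oz) at the origin. -/
def wRegC (a b c d : ℕ) : Prop :=
  ∃ C : ℝ, 0 < C ∧ ∃ ε : ℝ, 0 < ε ∧ ∀ x y z : ℂ,
    inXC a b c d x y z → nrm3C x y z < ε → gradNeC a b c d x y z →
    ‖fzC b c x z‖ ≤ C * nrm2C x y * gradNormC a b c d x y z

open Topology Asymptotics

lemma norm_le_nrm3C₁ (u v w : ℂ) : ‖u‖ ≤ nrm3C u v w :=
  Real.le_sqrt_of_sq_le (by nlinarith [sq_nonneg ‖v‖, sq_nonneg ‖w‖])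

lemma norm_le_nrm3C₂ (u v w : ℂ) : ‖v‖ ≤ nrm3C u v w :=
  Real.le_sqrt_of_sq_le (by nlinarith [sq_nonneg ‖u‖, sq_nonneg ‖w‖])

lemma norm_le_nrm3C₃ (u v w : ℂ) : ‖w‖ ≤ nrm3C u v w :=
  Real.le_sqrt_of_sq_le (by nlinarith [sq_nonneg ‖u‖, sq_nonneg ‖v‖])

lemma nrm3C_le_add (u v w : ℂ) : nrm3C u v w ≤ ‖u‖ + ‖v‖ + ‖w‖ :=
  (Real.sqrt_le_left (by positivity)).2 (by
    nlinarith [norm_nonneg u, norm_nonneg v, norm_nonneg w,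
      mul_nonneg (norm_nonneg u) (norm_nonneg v), mul_nonneg (norm_nonneg v) (norm_nonneg w),
      mul_nonneg (norm_nonneg u) (norm_nonneg w)])

lemma norm_le_nrm2C₁ (u v : ℂ) : ‖u‖ ≤ nrm2C u v :=
  Real.le_sqrt_of_sq_le (by nlinarith [sq_nonneg ‖v‖])

lemma norm_le_nrm2C₂ (u v : ℂ) : ‖v‖ ≤ nrm2C u v :=
  Real.le_sqrt_of_sq_le (by nlinarith [sq_nonneg ‖u‖])

section Asymptotics

variable {α 𝕜 : Type*} [NormedField 𝕜] {l : Filter α}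

lemma isTheta_mul_of_tendsto {f u : α → 𝕜} {L : 𝕜} (hu : Tendsto u l (𝓝 L)) (hL : L ≠ 0) :
    (fun i => f i * u i) =Θ[l] f := by
  have hu' : u =Θ[l] fun _ => (1 : 𝕜) :=
    ((isEquivalent_const_iff_tendsto hL).2 hu).isTheta.trans (isTheta_const_const hL one_ne_zero)
  simpa using (isTheta_refl f l).mul hu'

lemma tendsto_pow_nhds_zero {u : α → 𝕜} (hu : Tendsto u l (𝓝 0)) {k : ℕ} (hk : k ≠ 0) :
    Tendsto (fun i => u i ^ k) l (𝓝 0) := by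
  simpa [zero_pow hk] using hu.pow k

lemma isLittleO_of_isBigO_pow_of_tendsto_left {u v : α → 𝕜} {m n : ℕ}
    (h : (fun i => u i ^ m) =O[l] fun i => v i ^ n) (hu : Tendsto u l (𝓝 0)) (hmn : m < n) :
    u =o[l] v := by
  have hsmall : (fun i => u i ^ (n - m) * u i ^ m) =o[l] fun i => 1 * v i ^ n :=
    ((isLittleO_one_iff 𝕜).2 (tendsto_pow_nhds_zero hu (by omega))).mul_isBigO h
  have hpow : (fun i => u i ^ n) =o[l] fun i => v i ^ n := by
    simpa [← pow_add, Nat.sub_add_cancel hmn.le] using hsmall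
  exact IsLittleO.of_pow (f := u) (g := v) hpow (by omega)

lemma isLittleO_of_isBigO_pow_of_tendsto_right {u v : α → 𝕜} {m n : ℕ}
    (h : (fun i => u i ^ m) =O[l] fun i => v i ^ n) (hv : Tendsto v l (𝓝 0)) (hmn : m < n)
    (hm : m ≠ 0) : u =o[l] v := by
  have hsmall : (fun i => v i ^ (n - m) * v i ^ m) =o[l] fun i => 1 * v i ^ m :=
    ((isLittleO_one_iff 𝕜).2 (tendsto_pow_nhds_zero hv (by omega))).mul_isBigO (isBigO_refl _ _)
  have hpow : (fun i => v i ^ n) =o[l] fun i => v i ^ m := by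
    simpa [← pow_add, Nat.sub_add_cancel hmn.le] using hsmall
  exact IsLittleO.of_pow (f := u) (g := v) (h.trans_isLittleO hpow) hm

end Asymptotics

lemma mul_fxC_add_mul_fyC_eq {a b c d : ℕ} (ha : 0 < a) (hc : 0 < c) (hd : 0 < d) {x y z : ℂ}
    (h : y ^ a = z ^ b * x ^ c + x ^ d) :
    x * fxC b c d x z + y * fyC a y = (a - c) * (z ^ b * x ^ c) + (a - d) * x ^ d := by
  calc x * fxC b c d x z + y * fyC a y
      = -c * z ^ b * (x * x ^ (c - 1)) - d * (x * x ^ (d - 1)) + a * (y * y ^ (a - 1)) := by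
        simp only [fxC, fyC]; ring
    _ = (a - c) * (z ^ b * x ^ c) + (a - d) * x ^ d := by
        rw [mul_pow_sub_one hc.ne', mul_pow_sub_one hd.ne', mul_pow_sub_one ha.ne', h]
        ring

lemma fxC_one_eq_of_le {c d : ℕ} (hd : 0 < d) (hdc : d ≤ c) (x z : ℂ) :
    fxC 1 c d x z = x ^ (d - 1) * -(c * z * x ^ (c - d) + d) := by
  have hsplit : x ^ (c - 1) = x ^ (d - 1) * x ^ (c - d) := by rw [← pow_add]; congr 1; omega
  simp only [fxC, pow_one, hsplit]
  ring

section Sequences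

variable {ι : Type*} {l : Filter ι} {a b c d : ℕ} {x y z : ι → ℂ}

lemma fxC_isBigO_gradNormC :
    (fun i => fxC b c d (x i) (z i)) =O[l] fun i => gradNormC a b c d (x i) (y i) (z i) :=
  isBigO_of_le _ fun _ => (norm_le_nrm3C₁ _ _ _).trans (Real.le_norm_self _)

lemma fyC_isBigO_gradNormC :
    (fun i => fyC a (y i)) =O[l] fun i => gradNormC a b c d (x i) (y i) (z i) :=
  isBigO_of_le _ fun _ => (norm_le_nrm3C₂ _ _ _).trans (Real.le_norm_self _)

lemma one_isBigO_gradNormC :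
    (fun _ => (1 : ℂ)) =O[l] fun i => gradNormC 1 b c d (x i) (y i) (z i) :=
  fyC_isBigO_gradNormC.congr_left fun i => by simp [fyC]

lemma isBigO_nrm2C₁ : x =O[l] fun i => nrm2C (x i) (y i) :=
  isBigO_of_le _ fun _ => (norm_le_nrm2C₁ _ _).trans (Real.le_norm_self _)

lemma isBigO_nrm2C₂ : y =O[l] fun i => nrm2C (x i) (y i) :=
  isBigO_of_le _ fun _ => (norm_le_nrm2C₂ _ _).trans (Real.le_norm_self _)

lemma fxC_isTheta_pow (hx : Tendsto x l (𝓝 0)) (hz : Tendsto z l (𝓝 0)) (hd : 0 < d)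
    (hdc : d ≤ c) :
    (fun i => fxC 1 c d (x i) (z i)) =Θ[l] fun i => x i ^ (d - 1) := by
  have hu : Tendsto (fun i => -(c * z i * x i ^ (c - d) + d)) l (𝓝 (-d : ℂ)) := by
    simpa using (((tendsto_const_nhds (x := (c : ℂ))).mul hz).mul (hx.pow (c - d))).add_const
      (d : ℂ) |>.neg
  simpa only [fxC_one_eq_of_le hd hdc] using
    isTheta_mul_of_tendsto hu (neg_ne_zero.2 (Nat.cast_ne_zero.2 hd.ne'))

lemma pow_isTheta_pow (hx : Tendsto x l (𝓝 0)) (hz : Tendsto z l (𝓝 0)) (hdc : d ≤ c)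
    (hX : ∀ i, inXC a 1 c d (x i) (y i) (z i)) :
    (fun i => y i ^ a) =Θ[l] fun i => x i ^ d := by
  have hw : Tendsto (fun i => z i * x i ^ (c - d) + 1) l (𝓝 1) := by
    simpa using (hz.mul (hx.pow (c - d))).add_const 1
  have hfactor : ∀ i, x i ^ d * (z i * x i ^ (c - d) + 1) = y i ^ a := fun i => by
    rw [(hX i).1, pow_one, show c = d + (c - d) by omega, pow_add, Nat.add_sub_cancel_left]
    ring
  simpa only [hfactor] using isTheta_mul_of_tendsto (f := fun i => x i ^ d) hw one_ne_zero

lemma fzC_isLittleO_gradNormC_one (hc : 0 < c) (hx : Tendsto x l (𝓝 0)) :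
    (fun i => fzC 1 c (x i) (z i)) =o[l] fun i => gradNormC 1 1 c d (x i) (y i) (z i) := by
  have hfz : (fun i => fzC 1 c (x i) (z i)) =o[l] fun _ => (1 : ℂ) :=
    (isLittleO_one_iff ℂ).2 (by simpa [fzC] using (tendsto_pow_nhds_zero hx hc.ne').neg)
  exact hfz.trans_isBigO one_isBigO_gradNormC

lemma fzC_isLittleO_gradNormC_of_le (hd : 0 < d) (hdc : d ≤ c) (hx : Tendsto x l (𝓝 0))
    (hz : Tendsto z l (𝓝 0)) :
    (fun i => fzC 1 c (x i) (z i)) =o[l] fun i => gradNormC a 1 c d (x i) (y i) (z i) := by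
  have hsmall : (fun i => x i ^ (c + 1 - d) * x i ^ (d - 1)) =o[l]
      fun i => (1 : ℝ) * gradNormC a 1 c d (x i) (y i) (z i) :=
    ((isLittleO_one_iff ℝ).2 (tendsto_pow_nhds_zero hx (by omega))).mul_isBigO
      ((fxC_isTheta_pow hx hz hd hdc).2.trans fxC_isBigO_gradNormC)
  refine (hsmall.neg_left.congr_left fun i => ?_).congr_right fun i => one_mul _
  rw [fzC, ← pow_add, show c + 1 - d + (d - 1) = c by omega]
  ring

lemma mul_fxC_add_mul_fyC_isLittleO_one (hc : 0 < c) (hd : 0 < d)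
    (hX : ∀ i, inXC 1 1 c d (x i) (y i) (z i)) (hx : Tendsto x l (𝓝 0))
    (hz : Tendsto z l (𝓝 0)) :
    (fun i => x i * fxC 1 c d (x i) (z i) + y i * fyC 1 (y i)) =o[l]
      fun i => nrm2C (x i) (y i) * gradNormC 1 1 c d (x i) (y i) (z i) := by
  set φ : ι → ℂ := fun i => (1 - c) * z i * x i ^ (c - 1) + (1 - d) * x i ^ (d - 1)
  have hφ : Tendsto φ l (𝓝 0) := by
    have := (((tendsto_const_nhds (x := (1 - c : ℂ))).mul hz).mul (hx.pow (c - 1))).add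
      ((tendsto_const_nhds (x := (1 - d : ℂ))).mul (hx.pow (d - 1)))
    convert this using 2
    rcases (show d = 1 ∨ 1 < d by omega) with rfl | h1d
    · simp
    · simp [zero_pow (show d - 1 ≠ 0 by omega)]
  have hN : ∀ i, x i * φ i = x i * fxC 1 c d (x i) (z i) + y i * fyC 1 (y i) := fun i => by
    rw [mul_fxC_add_mul_fyC_eq one_pos hc hd (hX i).1, ← mul_pow_sub_one hc.ne',
      ← mul_pow_sub_one hd.ne']
    simp only [φ, pow_one, Nat.cast_one]
    ring
  have hsmall : (fun i => x i * φ i) =o[l] fun i => x i * 1 :=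
    (isBigO_refl x l).mul_isLittleO ((isLittleO_one_iff ℂ).2 hφ)
  exact (hsmall.congr_left hN).trans_isBigO (isBigO_nrm2C₁.mul one_isBigO_gradNormC)

lemma pow_isLittleO_nrm2C_mul_gradNormC (ha : 0 < a) (hd : 0 < d) (hdc : d ≤ c) (had : a ≠ d)
    (hX : ∀ i, inXC a 1 c d (x i) (y i) (z i)) (hx : Tendsto x l (𝓝 0))
    (hz : Tendsto z l (𝓝 0)) :
    (fun i => x i ^ d) =o[l]
      fun i => nrm2C (x i) (y i) * gradNormC a 1 c d (x i) (y i) (z i) := by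
  have hxy := pow_isTheta_pow hx hz hdc hX
  rcases had.lt_or_gt with had | hda
  · have hyx : y =o[l] x := isLittleO_of_isBigO_pow_of_tendsto_right hxy.1 hx had ha.ne'
    have hfy : (fun i => y i ^ (a - 1)) =O[l] fun i => gradNormC a 1 c d (x i) (y i) (z i) :=
      (isBigO_self_const_mul (Nat.cast_ne_zero.2 ha.ne') _ l).trans fyC_isBigO_gradNormC
    refine hxy.2.trans_isLittleO ?_
    refine ((hyx.norm_right.mul_isBigO hfy).congr_left fun i => ?_).trans_isBigO
      (isBigO_nrm2C₁.norm_left.mul (isBigO_refl _ _))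
    exact mul_pow_sub_one ha.ne' _
  · have hxy' : x =o[l] y := isLittleO_of_isBigO_pow_of_tendsto_left hxy.2 hx hda
    have hfx : (fun i => x i ^ (d - 1)) =O[l] fun i => gradNormC a 1 c d (x i) (y i) (z i) :=
      (fxC_isTheta_pow hx hz hd hdc).2.trans fxC_isBigO_gradNormC
    refine ((hxy'.norm_right.mul_isBigO hfx).congr_left fun i => ?_).trans_isBigO
      (isBigO_nrm2C₂.norm_left.mul (isBigO_refl _ _))
    exact mul_pow_sub_one hd.ne' _

lemma mul_fxC_add_mul_fyC_isLittleO_of_le (ha : 0 < a) (hc : 0 < c) (hd : 0 < d) (hdc : d ≤ c)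
    (hX : ∀ i, inXC a 1 c d (x i) (y i) (z i)) (hx : Tendsto x l (𝓝 0))
    (hz : Tendsto z l (𝓝 0)) :
    (fun i => x i * fxC 1 c d (x i) (z i) + y i * fyC a (y i)) =o[l]
      fun i => nrm2C (x i) (y i) * gradNormC a 1 c d (x i) (y i) (z i) := by
  have hD : (fun i => x i ^ d) =O[l]
      fun i => nrm2C (x i) (y i) * gradNormC a 1 c d (x i) (y i) (z i) :=
    (isBigO_nrm2C₁.mul ((fxC_isTheta_pow hx hz hd hdc).2.trans fxC_isBigO_gradNormC)).congr_left
      fun i => mul_pow_sub_one hd.ne' _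
  have hzx : (fun i => z i * x i ^ c) =o[l] fun i => x i ^ d := by
    have hw : Tendsto (fun i => z i * x i ^ (c - d)) l (𝓝 0) := by
      simpa using hz.mul (hx.pow (c - d))
    refine (((isLittleO_one_iff ℂ).2 hw).mul_isBigO (isBigO_refl (fun i => x i ^ d) l)
      ).congr (fun i => ?_) fun i => one_mul _
    rw [mul_assoc, ← pow_add, Nat.sub_add_cancel hdc]
  have hxd : (fun i => ((a : ℂ) - d) * x i ^ d) =o[l]
      fun i => nrm2C (x i) (y i) * gradNormC a 1 c d (x i) (y i) (z i) := by
    rcases eq_or_ne a d with rfl | had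
    · simp
    · exact (pow_isLittleO_nrm2C_mul_gradNormC ha hd hdc had hX hx hz).const_mul_left _
  refine (((hzx.trans_isBigO hD).const_mul_left ((a : ℂ) - c)).add hxd).congr_left fun i => ?_
  rw [mul_fxC_add_mul_fyC_eq ha hc hd (hX i).1, pow_one]

end Sequences

lemma aRegC_of_isLittleO {a b c d : ℕ}
    (h : ∀ x y z : ℕ → ℂ, (∀ n, inXC a b c d (x n) (y n) (z n)) → Tendsto x atTop (𝓝 0) →
      Tendsto z atTop (𝓝 0) →
      (fun n => fzC b c (x n) (z n)) =o[atTop] fun n => gradNormC a b c d (x n) (y n) (z n)) :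
    aRegC a b c d := fun x y z hX h0 _ =>
  (h x y z hX h0.fst_nhds h0.snd_nhds.snd_nhds).norm_left.tendsto_div_nhds_zero

lemma bpiC_of_isLittleO {a b c d : ℕ}
    (h : ∀ x y z : ℕ → ℂ, (∀ n, inXC a b c d (x n) (y n) (z n)) → Tendsto x atTop (𝓝 0) →
      Tendsto z atTop (𝓝 0) →
      (fun n => x n * fxC b c d (x n) (z n) + y n * fyC a (y n)) =o[atTop]
        fun n => nrm2C (x n) (y n) * gradNormC a b c d (x n) (y n) (z n)) :
    bpiC a b c d := fun x y z hX h0 _ =>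
  (h x y z hX h0.fst_nhds h0.snd_nhds.snd_nhds).norm_left.tendsto_div_nhds_zero

lemma bRegC_one_one {c d : ℕ} (hc : 0 < c) (hd : 0 < d) : bRegC 1 1 c d :=
  ⟨aRegC_of_isLittleO fun _ _ _ _ hx _ => fzC_isLittleO_gradNormC_one hc hx,
    bpiC_of_isLittleO fun _ _ _ hX hx hz => mul_fxC_add_mul_fyC_isLittleO_one hc hd hX hx hz⟩

lemma bRegC_of_le {a c d : ℕ} (ha : 0 < a) (hc : 0 < c) (hd : 0 < d) (hdc : d ≤ c) :
    bRegC a 1 c d :=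
  ⟨aRegC_of_isLittleO fun _ _ _ _ hx hz => fzC_isLittleO_gradNormC_of_le hd hdc hx hz,
    bpiC_of_isLittleO fun _ _ _ hX hx hz =>
      mul_fxC_add_mul_fyC_isLittleO_of_le ha hc hd hdc hX hx hz⟩

lemma one_div_le_fzC_div_gradNormC_of_lt {a c d : ℕ} (ha : 2 ≤ a) (hc : 0 < c) (hcd : c < d)
    {t : ℂ} (ht0 : t ≠ 0) (ht1 : ‖t‖ ≤ 1) :
    1 / ((d - c : ℕ) + 1 : ℝ) ≤
      ‖fzC 1 c t (-t ^ (d - c))‖ / gradNormC a 1 c d t 0 (-t ^ (d - c)) := by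
  have hfx : fxC 1 c d t (-t ^ (d - c)) = -((d - c : ℕ) : ℂ) * t ^ (d - 1) := by
    have hsplit : t ^ (d - 1) = t ^ (d - c) * t ^ (c - 1) := by rw [← pow_add]; congr 1; omega
    rw [fxC, pow_one, hsplit, Nat.cast_sub hcd.le]
    ring
  have hfy : fyC a 0 = 0 := by simp [fyC, zero_pow (show a - 1 ≠ 0 by omega)]
  have hfz : ‖fzC 1 c t (-t ^ (d - c))‖ = ‖t‖ ^ c := by simp [fzC]
  have hpow : ‖t‖ ^ (d - 1) ≤ ‖t‖ ^ c := pow_le_pow_of_le_one (norm_nonneg _) ht1 (by omega)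
  have hgrad : gradNormC a 1 c d t 0 (-t ^ (d - c)) ≤ ((d - c : ℕ) + 1 : ℝ) * ‖t‖ ^ c :=
    calc gradNormC a 1 c d t 0 (-t ^ (d - c))
        ≤ ‖fxC 1 c d t (-t ^ (d - c))‖ + ‖fyC a 0‖ + ‖fzC 1 c t (-t ^ (d - c))‖ :=
          nrm3C_le_add _ _ _
      _ = (d - c : ℕ) * ‖t‖ ^ (d - 1) + ‖t‖ ^ c := by simp [hfx, hfy, hfz]
      _ ≤ ((d - c : ℕ) + 1 : ℝ) * ‖t‖ ^ c := by nlinarith [(d - c : ℕ).cast_nonneg (α := ℝ)]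
  have hfz_pos : 0 < ‖t‖ ^ c := by positivity
  have hgrad_pos : 0 < gradNormC a 1 c d t 0 (-t ^ (d - c)) :=
    hfz_pos.trans_le (hfz ▸ norm_le_nrm3C₃ _ _ _)
  rw [hfz, div_le_div_iff₀ (by positivity) hgrad_pos]
  linarith

lemma not_aRegC_of_lt {a c d : ℕ} (ha : 2 ≤ a) (hc : 0 < c) (hcd : c < d) :
    ¬ aRegC a 1 c d := by
  intro hreg
  set t : ℕ → ℂ := fun n => ((n + 1 : ℕ) : ℂ)⁻¹
  have ht0 : ∀ n, t n ≠ 0 := fun n => inv_ne_zero (Nat.cast_ne_zero.2 n.succ_ne_zero)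
  have ht1 : ∀ n, ‖t n‖ ≤ 1 := fun n => by
    rw [norm_inv, Complex.norm_natCast]
    exact inv_le_one_of_one_le₀ (by simp)
  have ht : Tendsto t atTop (𝓝 0) :=
    tendsto_inv_atTop_nhds_zero_nat.comp (tendsto_add_atTop_nat 1)
  have hX : ∀ n, inXC a 1 c d (t n) 0 (-t n ^ (d - c)) := fun n => by
    refine ⟨?_, fun h => ht0 n h.1⟩
    rw [zero_pow (by omega), pow_one, neg_mul, ← pow_add, Nat.sub_add_cancel hcd.le,
      neg_add_cancel]
  have hgrad : ∀ n, gradNeC a 1 c d (t n) 0 (-t n ^ (d - c)) := fun n h => by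
    simpa [fzC, ht0 n] using h.2.2
  have h0 : Tendsto (fun n => (t n, (0 : ℂ), -t n ^ (d - c))) atTop (𝓝 (0, 0, 0)) :=
    ht.prodMk_nhds (tendsto_const_nhds.prodMk_nhds
      (by simpa using (tendsto_pow_nhds_zero ht (by omega : d - c ≠ 0)).neg))
  have hlim := ge_of_tendsto' (hreg t (fun _ => 0) _ hX h0 hgrad)
    fun n => one_div_le_fzC_div_gradNormC_of_lt ha hc hcd (ht0 n) (ht1 n)
  exact absurd hlim (not_le.2 (by positivity))

/-- For b = 1, Whitney (a)- and (b)-regularity coincide for y^a = z x^c + x^d in ℂ³,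
both being equivalent to (a = 1 or d ≤ c). -/
theorem whitney_a_iff_b_complex_b_eq_one (a c d : ℕ) (ha : 0 < a) (hc : 0 < c) (hd : 0 < d) :
    (aRegC a 1 c d ↔ bRegC a 1 c d) ∧
      (aRegC a 1 c d ↔ (a = 1 ∨ d ≤ c)) ∧
      (bRegC a 1 c d ↔ (a = 1 ∨ d ≤ c)) := by
  have hreg : a = 1 ∨ d ≤ c → bRegC a 1 c d := by
    rintro (rfl | hdc)
    · exact bRegC_one_one hc hd
    · exact bRegC_of_le ha hc hd hdc
  have hcond : aRegC a 1 c d → a = 1 ∨ d ≤ c := by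
    intro h
    by_contra! hP
    exact not_aRegC_of_lt (by omega) hc hP.2 h
  exact ⟨⟨fun h => hreg (hcond h), And.left⟩, ⟨hcond, fun h => (hreg h).1⟩,
    ⟨fun h => hcond h.1, hreg⟩⟩
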